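/- arXiv:1604.06689 — 4 statements merged into one kernel-verified Lean document; each statement's English description precedes it below -/
import Mathlib

section
/- Let γ ∈ SL(2,ℂ) with ‖γ‖ > 1, where ‖γ‖ is the operator norm. Write the Cartan decomposition γ = k a k' with k, k' ∈ SU(2) and a diagonal with entries λ, λ⁻¹, |λ| ≥ 1; set s = k'⁻¹(0) and n = k(∞) in ℂP¹. Then for α ∈ (0,1): γ maps the complement of the open chordal disc D(s,α) onto the closed chordal disc of center n and radius α if and only if ‖γ‖ = √(1-α²)/α. -/
/-! In homogeneous coordinates the chordal distance between the lines through `u` and `v`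
is `|det (u, v)| / (‖u‖ ‖v‖)`, which every unitary matrix preserves. So `k` and `k'` act as
chordal isometries, and everything reduces to `a = diag (λ, λ⁻¹)`, acting as `z ↦ λ² z`.
The complement of the open disc `D(0, α)` is `{|z| ≥ α / √(1 - α²)} ∪ {∞}` and the closed
disc `D(∞, α)` is `{|z| ≥ √(1 - α²) / α} ∪ {∞}`, so `a` maps the first onto the second iff
`|λ|² α / √(1 - α²) = √(1 - α²) / α`, i.e. `|λ| = √(1 - α²) / α`. Finally
`‖γ‖ = ‖a‖ = |λ|` because `|λ| ≥ 1`. -/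

open Complex Set

/-- Chordal distance on ℂP¹ = ℂ ∪ {∞}, modeled as `Option ℂ` (`none` = ∞). -/
noncomputable def chordal : Option ℂ → Option ℂ → ℝ
  | some z₁, some z₂ =>
      ‖z₁ - z₂‖ /
        (Real.sqrt (1 + ‖z₁‖ ^ 2) * Real.sqrt (1 + ‖z₂‖ ^ 2))
  | some z, none => 1 / Real.sqrt (1 + ‖z‖ ^ 2)
  | none, some z => 1 / Real.sqrt (1 + ‖z‖ ^ 2)
  | none, none => 0

/-- Möbius action of a 2×2 complex matrix on ℂP¹. -/
noncomputable def mobius (g : Matrix (Fin 2) (Fin 2) ℂ) : Option ℂ → Option ℂ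
  | some z => if g 1 0 * z + g 1 1 = 0 then none
              else some ((g 0 0 * z + g 0 1) / (g 1 0 * z + g 1 1))
  | none => if g 1 0 = 0 then none else some (g 0 0 / g 1 0)

/-- Operator norm of a 2×2 complex matrix acting on ℂ² with Euclidean norm. -/
noncomputable def opNorm (g : Matrix (Fin 2) (Fin 2) ℂ) : ℝ :=
  ‖LinearMap.toContinuousLinearMap (Matrix.toEuclideanLin g)‖

/-- Membership in SU(2). -/
def SU2 (k : Matrix (Fin 2) (Fin 2) ℂ) : Prop := k.det = 1 ∧ k.conjTranspose * k = 1

/-- Open chordal disc. -/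
def Dopen (z : Option ℂ) (α : ℝ) : Set (Option ℂ) := {w | chordal w z < α}

/-- Closed chordal disc. -/
def Dclosed (z : Option ℂ) (α : ℝ) : Set (Option ℂ) := {w | chordal w z ≤ α}
abbrev SL2 := Matrix.SpecialLinearGroup (Fin 2) ℂ

open Matrix

noncomputable def projPt (v : Fin 2 → ℂ) : Option ℂ :=
  if v 1 = 0 then none else some (v 0 / v 1)

def homCoords : Option ℂ → Fin 2 → ℂ
  | some z => ![z, 1]
  | none => ![1, 0]

lemma projPt_smul {c : ℂ} (hc : c ≠ 0) (v : Fin 2 → ℂ) : projPt (c • v) = projPt v := by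
  simp [projPt, hc, mul_div_mul_left]

lemma projPt_homCoords (x : Option ℂ) : projPt (homCoords x) = x := by
  cases x <;> simp [projPt, homCoords]

lemma homCoords_ne_zero (x : Option ℂ) : homCoords x ≠ 0 := by
  cases x <;> simp [homCoords, funext_iff, Fin.forall_fin_two]

lemma exists_smul_homCoords_projPt {v : Fin 2 → ℂ} (hv : v ≠ 0) :
    ∃ c ≠ (0 : ℂ), v = c • homCoords (projPt v) := by
  by_cases h1 : v 1 = 0
  · refine ⟨v 0, fun h0 => hv (funext <| Fin.forall_fin_two.2 ⟨h0, h1⟩), ?_⟩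
    ext i; fin_cases i <;> simp [projPt, homCoords, h1]
  · refine ⟨v 1, h1, ?_⟩
    ext i; fin_cases i <;> simp [projPt, homCoords, h1, mul_div_cancel₀]

lemma mobius_eq_projPt_mulVec (g : Matrix (Fin 2) (Fin 2) ℂ) (x : Option ℂ) :
    mobius g x = projPt (g *ᵥ homCoords x) := by
  cases x <;> simp [mobius, projPt, homCoords, mulVec, dotProduct, Fin.sum_univ_two, add_comm]

lemma mobius_projPt (g : Matrix (Fin 2) (Fin 2) ℂ) {v : Fin 2 → ℂ} (hv : v ≠ 0) :
    mobius g (projPt v) = projPt (g *ᵥ v) := by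
  obtain ⟨c, hc, hcv⟩ := exists_smul_homCoords_projPt hv
  rw [mobius_eq_projPt_mulVec]
  conv_rhs => rw [hcv, mulVec_smul, projPt_smul hc]

lemma mobius_mul (g h : Matrix (Fin 2) (Fin 2) ℂ) (hh : h.det ≠ 0) (x : Option ℂ) :
    mobius (g * h) x = mobius g (mobius h x) := by
  have hv : h *ᵥ homCoords x ≠ 0 := fun h0 =>
    homCoords_ne_zero x (eq_zero_of_mulVec_eq_zero hh h0)
  rw [mobius_eq_projPt_mulVec, ← mulVec_mulVec, mobius_eq_projPt_mulVec h, mobius_projPt g hv]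

lemma mobius_one (x : Option ℂ) : mobius 1 x = x := by
  rw [mobius_eq_projPt_mulVec, one_mulVec, projPt_homCoords]

lemma mobius_mobius_nonsing_inv {g : Matrix (Fin 2) (Fin 2) ℂ} (hg : IsUnit g.det)
    (x : Option ℂ) : mobius g (mobius g⁻¹ x) = x := by
  rw [← mobius_mul _ _ (isUnit_nonsing_inv_det g hg).ne_zero, mul_nonsing_inv g hg, mobius_one]

lemma mobius_bijective {g : Matrix (Fin 2) (Fin 2) ℂ} (hg : IsUnit g.det) :
    Function.Bijective (mobius g) := by
  refine ⟨Function.LeftInverse.injective (g := mobius g⁻¹) fun x => ?_,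
    fun x => ⟨_, mobius_mobius_nonsing_inv hg x⟩⟩
  rw [← mobius_mul _ _ hg.ne_zero, nonsing_inv_mul g hg, mobius_one]

noncomputable def chordalHom (u v : Fin 2 → ℂ) : ℝ :=
  ‖u 0 * v 1 - u 1 * v 0‖ / (‖WithLp.toLp 2 u‖ * ‖WithLp.toLp 2 v‖)

lemma chordalHom_smul {c d : ℂ} (hc : c ≠ 0) (hd : d ≠ 0) (u v : Fin 2 → ℂ) :
    chordalHom (c • u) (d • v) = chordalHom u v := by
  have e : (c • u) 0 * (d • v) 1 - (c • u) 1 * (d • v) 0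
      = (c * d) * (u 0 * v 1 - u 1 * v 0) := by
    simp only [Pi.smul_apply, smul_eq_mul]; ring
  rw [chordalHom, chordalHom, e, WithLp.toLp_smul, WithLp.toLp_smul, norm_smul, norm_smul,
    norm_mul, norm_mul]
  have : ‖c‖ * ‖d‖ ≠ 0 := by positivity
  rw [mul_mul_mul_comm, mul_div_mul_left _ _ this]

lemma chordal_eq_chordalHom (x y : Option ℂ) :
    chordal x y = chordalHom (homCoords x) (homCoords y) := by
  cases x <;> cases y <;>
    simp [chordal, chordalHom, homCoords, EuclideanSpace.norm_eq, add_comm]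

lemma chordal_projPt {u v : Fin 2 → ℂ} (hu : u ≠ 0) (hv : v ≠ 0) :
    chordal (projPt u) (projPt v) = chordalHom u v := by
  obtain ⟨c, hc, hcu⟩ := exists_smul_homCoords_projPt hu
  obtain ⟨d, hd, hdv⟩ := exists_smul_homCoords_projPt hv
  rw [chordal_eq_chordalHom]
  conv_rhs => rw [hcu, hdv, chordalHom_smul hc hd]

lemma chordalHom_mulVec_of_mem_unitary {k : Matrix (Fin 2) (Fin 2) ℂ} (hk : k ∈ unitary _)
    (u v : Fin 2 → ℂ) : chordalHom (k *ᵥ u) (k *ᵥ v) = chordalHom u v := by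
  have hdet : ‖k.det‖ = 1 := CStarRing.norm_of_mem_unitary (det_of_mem_unitary hk)
  have hnorm (w : Fin 2 → ℂ) : ‖WithLp.toLp 2 (k *ᵥ w)‖ = ‖WithLp.toLp 2 w‖ := by
    rw [← toEuclideanCLM_toLp]
    exact ContinuousLinearMap.norm_map_of_mem_unitary (Unitary.map_mem toEuclideanCLM hk) _
  have e : (k *ᵥ u) 0 * (k *ᵥ v) 1 - (k *ᵥ u) 1 * (k *ᵥ v) 0
      = k.det * (u 0 * v 1 - u 1 * v 0) := by
    simp only [mulVec, dotProduct, Fin.sum_univ_two, det_fin_two]; ring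
  rw [chordalHom, chordalHom, e, norm_mul, hdet, one_mul, hnorm, hnorm]

lemma isUnit_det_of_mem_unitary {ι : Type*} [Fintype ι] [DecidableEq ι] {k : Matrix ι ι ℂ}
    (hk : k ∈ unitary _) :
    IsUnit k.det :=
  UnitaryGroup.det_isUnit ⟨k, hk⟩

lemma mobius_bijective_of_mem_unitary {k : Matrix (Fin 2) (Fin 2) ℂ} (hk : k ∈ unitary _) :
    Function.Bijective (mobius k) :=
  mobius_bijective (isUnit_det_of_mem_unitary hk)

lemma chordal_mobius_of_mem_unitary {k : Matrix (Fin 2) (Fin 2) ℂ} (hk : k ∈ unitary _)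
    (x y : Option ℂ) : chordal (mobius k x) (mobius k y) = chordal x y := by
  have hk0 : ∀ x, k *ᵥ homCoords x ≠ 0 := fun x h0 =>
    homCoords_ne_zero x (eq_zero_of_mulVec_eq_zero (isUnit_det_of_mem_unitary hk).ne_zero h0)
  rw [mobius_eq_projPt_mulVec, mobius_eq_projPt_mulVec, chordal_projPt (hk0 x) (hk0 y),
    chordalHom_mulVec_of_mem_unitary hk, chordal_eq_chordalHom]

section ChordalIsometry

variable {f : Option ℂ → Option ℂ} (hf : ∀ x y, chordal (f x) (f y) = chordal x y)
include hf

lemma preimage_Dopen (c : Option ℂ) (α : ℝ) : f ⁻¹' Dopen (f c) α = Dopen c α := by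
  ext x; simp [Dopen, hf]

lemma preimage_Dclosed (c : Option ℂ) (α : ℝ) : f ⁻¹' Dclosed (f c) α = Dclosed c α := by
  ext x; simp [Dclosed, hf]

lemma image_compl_Dopen (hsurj : Function.Surjective f) (c : Option ℂ) (α : ℝ) :
    f '' (Dopen c α)ᶜ = (Dopen (f c) α)ᶜ := by
  rw [← preimage_Dopen hf, ← preimage_compl, image_preimage_eq _ hsurj]

lemma image_Dclosed (hsurj : Function.Surjective f) (c : Option ℂ) (α : ℝ) :
    f '' Dclosed c α = Dclosed (f c) α := by
  rw [← preimage_Dclosed hf, image_preimage_eq _ hsurj]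

end ChordalIsometry

lemma div_sqrt_one_add_sq_lt_iff {u α : ℝ} (hu : 0 ≤ u) (hα0 : 0 ≤ α) (hα1 : α < 1) :
    u / √(1 + u ^ 2) < α ↔ u < α / √(1 - α ^ 2) := by
  have h1 : 0 < 1 - α ^ 2 := by nlinarith
  have e1 : α * √(1 + u ^ 2) = √(α ^ 2 * (1 + u ^ 2)) := by
    rw [Real.sqrt_mul (sq_nonneg _), Real.sqrt_sq hα0]
  have e2 : u * √(1 - α ^ 2) = √(u ^ 2 * (1 - α ^ 2)) := by
    rw [Real.sqrt_mul (sq_nonneg _), Real.sqrt_sq hu]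
  rw [div_lt_iff₀ (by positivity), lt_div_iff₀ (by positivity), e1, e2, Real.lt_sqrt hu,
    Real.sqrt_lt (by positivity) hα0]
  constructor <;> intro h <;> nlinarith

lemma inv_sqrt_one_add_sq_le_iff {u α : ℝ} (hu : 0 ≤ u) (hα0 : 0 < α) :
    (√(1 + u ^ 2))⁻¹ ≤ α ↔ √(1 - α ^ 2) / α ≤ u := by
  have e1 : α * √(1 + u ^ 2) = √(α ^ 2 * (1 + u ^ 2)) := by
    rw [Real.sqrt_mul (sq_nonneg _), Real.sqrt_sq hα0.le]
  have e2 : u * α = √((u * α) ^ 2) := (Real.sqrt_sq (by positivity)).symm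
  rw [← one_div, div_le_iff₀ (by positivity), div_le_iff₀ hα0, e1, e2,
    Real.sqrt_le_sqrt_iff (by positivity), Real.one_le_sqrt]
  constructor <;> intro h <;> nlinarith

lemma Dopen_some_zero {α : ℝ} (hα0 : 0 ≤ α) (hα1 : α < 1) :
    Dopen (some 0) α = some '' Metric.ball 0 (α / √(1 - α ^ 2)) := by
  ext x
  cases x with
  | none => simp [Dopen, chordal, hα1.le]
  | some z =>
    simp [Dopen, chordal, div_sqrt_one_add_sq_lt_iff (norm_nonneg z) hα0 hα1]

lemma Dclosed_none {α : ℝ} (hα0 : 0 < α) :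
    Dclosed none α = (some '' Metric.ball 0 (√(1 - α ^ 2) / α))ᶜ := by
  ext x
  cases x with
  | none => simp [Dclosed, chordal, hα0.le]
  | some z =>
    simp [Dclosed, chordal, inv_sqrt_one_add_sq_le_iff (norm_nonneg z) hα0]

lemma ball_zero_eq_ball_zero_iff {E : Type*} [NormedAddCommGroup E] [NormedSpace ℝ E]
    [Nontrivial E] {r s : ℝ} (hr : 0 < r) (hs : 0 < s) :
    Metric.ball (0 : E) r = Metric.ball 0 s ↔ r = s := by
  refine ⟨fun h => ?_, fun h => h ▸ rfl⟩
  have hsphere := congrArg frontier h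
  rw [frontier_ball _ hr.ne', frontier_ball _ hs.ne'] at hsphere
  obtain ⟨y, hy⟩ := exists_norm_eq E hr.le
  have hmem : y ∈ Metric.sphere (0 : E) r := by simp [hy]
  rw [hsphere, mem_sphere_zero_iff_norm, hy] at hmem
  exact hmem

section Diagonal

variable {μ : ℂ} (hμ : μ ≠ 0)
include hμ

lemma isUnit_det_diagonal_inv : IsUnit (diagonal ![μ, μ⁻¹]).det := by
  simp [det_diagonal, Fin.prod_univ_two, hμ]

lemma mobius_diagonal_some (z : ℂ) :
    mobius (diagonal ![μ, μ⁻¹]) (some z) = some (μ ^ 2 * z) := by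
  simp [mobius, hμ, sq, mul_right_comm]

lemma image_mobius_diagonal_compl_ball (r : ℝ) :
    mobius (diagonal ![μ, μ⁻¹]) '' (some '' Metric.ball 0 r)ᶜ
      = (some '' Metric.ball 0 (‖μ‖ ^ 2 * r))ᶜ := by
  rw [image_compl_eq (mobius_bijective (isUnit_det_diagonal_inv hμ)), image_image]
  simp only [mobius_diagonal_some hμ]
  have hball : (μ ^ 2 * ·) '' Metric.ball 0 r = Metric.ball 0 (‖μ‖ ^ 2 * r) := by
    have h := smul_ball (pow_ne_zero 2 hμ) (0 : ℂ) r
    rwa [smul_zero, norm_pow, ← image_smul] at h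
  rw [← image_image some (μ ^ 2 * ·), hball]

end Diagonal

open scoped Matrix.Norms.L2Operator in
lemma opNorm_mul_diagonal_mul {k k' : Matrix (Fin 2) (Fin 2) ℂ} (hk : k ∈ unitary _)
    (hk' : k' ∈ unitary _) {μ : ℂ} (hμ : 1 ≤ ‖μ‖) :
    opNorm (k * diagonal ![μ, μ⁻¹] * k') = ‖μ‖ := by
  show ‖k * diagonal ![μ, μ⁻¹] * k'‖ = ‖μ‖
  rw [CStarRing.norm_mul_mem_unitary _ hk', CStarRing.norm_mem_unitary_mul _ hk,
    l2_opNorm_diagonal]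
  refine le_antisymm ((pi_norm_le_iff_of_nonneg (norm_nonneg μ)).2 ?_)
    (norm_le_pi_norm ![μ, μ⁻¹] 0)
  simpa [Fin.forall_fin_two] using (inv_le_one_of_one_le₀ hμ).trans hμ

lemma SU2.mem_unitary {k : Matrix (Fin 2) (Fin 2) ℂ} (hk : SU2 k) : k ∈ unitary _ :=
  mem_unitaryGroup_iff'.2 hk.2

theorem sl2_image_compl_disc_iff_general (γ : SL2)
    (k k' : Matrix (Fin 2) (Fin 2) ℂ) (lam : ℂ)
    (hk : SU2 k) (hk' : SU2 k') (hlam : 1 ≤ ‖lam‖)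
    (hdec : (↑γ : Matrix (Fin 2) (Fin 2) ℂ) = k * Matrix.diagonal ![lam, lam⁻¹] * k')
    (s n : Option ℂ) (hs : s = mobius k'⁻¹ (some 0)) (hn : n = mobius k none)
    (α : ℝ) (hα : α ∈ Set.Ioo (0:ℝ) 1) :
    mobius ↑γ '' (Dopen s α)ᶜ = Dclosed n α ↔
      opNorm ↑γ = Real.sqrt (1 - α ^ 2) / α := by
  obtain ⟨hα0, hα1⟩ := hα
  have hr : 0 < √(1 - α ^ 2) := Real.sqrt_pos.2 (by nlinarith)
  have hlam0 : lam ≠ 0 := norm_pos_iff.mp (one_pos.trans_le hlam)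
  have hku := hk.mem_unitary
  have hku' := hk'.mem_unitary
  have hγ : mobius γ = mobius k ∘ mobius (diagonal ![lam, lam⁻¹]) ∘ mobius k' := by
    funext x
    rw [hdec, mobius_mul _ _ (isUnit_det_of_mem_unitary hku').ne_zero,
      mobius_mul _ _ (isUnit_det_diagonal_inv hlam0).ne_zero, Function.comp_apply,
      Function.comp_apply]
  have hsource :
      mobius k' '' (Dopen s α)ᶜ = (some '' Metric.ball 0 (α / √(1 - α ^ 2)))ᶜ := by
    rw [image_compl_Dopen (chordal_mobius_of_mem_unitary hku')
      (mobius_bijective_of_mem_unitary hku').2, hs,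
      mobius_mobius_nonsing_inv (isUnit_det_of_mem_unitary hku'), Dopen_some_zero hα0.le hα1]
  have htarget : Dclosed n α = mobius k '' (some '' Metric.ball 0 (√(1 - α ^ 2) / α))ᶜ := by
    rw [← Dclosed_none hα0, image_Dclosed (chordal_mobius_of_mem_unitary hku)
      (mobius_bijective_of_mem_unitary hku).2, hn]
  rw [hγ, image_comp, image_comp, hsource, htarget,
    (mobius_bijective_of_mem_unitary hku).1.image_injective.eq_iff,
    image_mobius_diagonal_compl_ball hlam0, compl_inj_iff,
    (Option.some_injective _).image_injective.eq_iff,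
    ball_zero_eq_ball_zero_iff (by positivity) (div_pos hr hα0), hdec,
    opNorm_mul_diagonal_mul hku hku' hlam]
  rw [← inv_div, mul_inv_eq_iff_eq_mul₀ (div_pos hr hα0).ne', ← sq,
    sq_eq_sq₀ (norm_nonneg _) (div_pos hr hα0).le]

theorem sl2_image_compl_disc_iff (γ : SL2) (hγ : 1 < opNorm ↑γ)
    (k k' : Matrix (Fin 2) (Fin 2) ℂ) (lam : ℂ)
    (hk : SU2 k) (hk' : SU2 k') (hlam : 1 ≤ ‖lam‖)
    (hdec : (↑γ : Matrix (Fin 2) (Fin 2) ℂ) = k * Matrix.diagonal ![lam, lam⁻¹] * k')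
    (s n : Option ℂ) (hs : s = mobius k'⁻¹ (some 0)) (hn : n = mobius k none)
    (α : ℝ) (hα : α ∈ Set.Ioo (0:ℝ) 1) :
    mobius ↑γ '' (Dopen s α)ᶜ = Dclosed n α ↔
      opNorm ↑γ = Real.sqrt (1 - α ^ 2) / α :=
  sl2_image_compl_disc_iff_general γ k k' lam hk hk' hlam hdec s n hs hn α hα
end

section
/- There is a universal constant C₂ > 0 such that for every γ ∈ SL(2,ℂ) with ‖γ‖ > 1, the restriction of the Möbius action of γ to the complement of the open chordal disc D(s, ‖γ‖⁻¹) (where s is the south pole of γ from its Cartan decomposition) is C₂-Lipschitz for the chordal distance. -/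
open Complex Set

/-
Lift ℂP¹ to ℂ² by homogeneous coordinates `z ↦ (z, 1)`, `∞ ↦ (1, 0)`. The chordal distance
becomes `d(x, y) = |det (v, w)| / (‖v‖ ‖w‖)` for any lifts `v`, `w`, and a Möbius map `g` lifts to
the linear map `g`. Hence for `det g = 1`

  d(g x, g y) = d(x, y) · ‖v‖ ‖w‖ / (‖g v‖ ‖g w‖),

so `g` is `1`-Lipschitz on any set whose lifts it does not shrink. For `γ = k a k'` the unitary
factors preserve norms, and `‖a u‖ ≥ |λ| |u₀|`, where for `u = k' v` the ratio `|u₀| / ‖u‖` is the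
chordal distance from `k' x` to `0`, i.e. from `x` to the south pole `s = k'⁻¹ 0`. Outside `D(s, ‖γ‖⁻¹)` this distance is
at least `‖γ‖⁻¹ ≥ |λ|⁻¹`, so `γ` does not shrink lifts there, and `C₂ = 1` works.
-/

open scoped Matrix.Norms.L2Operator
open Matrix

local notation "ℂ²" => EuclideanSpace ℂ (Fin 2)
local notation "toCLM" => toEuclideanCLM (n := Fin 2) (𝕜 := ℂ)

def homCoord : Option ℂ → ℂ²
  | some z => !₂[z, 1]
  | none => !₂[1, 0]

noncomputable def homChordal (v w : ℂ²) : ℝ :=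
  ‖v 0 * w 1 - v 1 * w 0‖ / (‖v‖ * ‖w‖)

lemma norm_homCoord_some (z : ℂ) : ‖homCoord (some z)‖ = √(1 + ‖z‖ ^ 2) := by
  simp [homCoord, EuclideanSpace.norm_eq, add_comm]

lemma norm_homCoord_none : ‖homCoord none‖ = 1 := by
  simp [homCoord, EuclideanSpace.norm_eq]

lemma norm_homCoord_pos (x : Option ℂ) : 0 < ‖homCoord x‖ := by
  cases x <;> simp only [norm_homCoord_some, norm_homCoord_none] <;> positivity

lemma chordal_eq_homChordal (x y : Option ℂ) :
    chordal x y = homChordal (homCoord x) (homCoord y) := by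
  cases x <;> cases y <;>
    simp [chordal, homChordal, norm_homCoord_some, norm_homCoord_none] <;> simp [homCoord]

lemma homChordal_comm (v w : ℂ²) : homChordal v w = homChordal w v := by
  rw [homChordal, homChordal, mul_comm ‖v‖, ← norm_neg]
  ring_nf

lemma homChordal_smul_left {c : ℂ} (hc : c ≠ 0) (v w : ℂ²) :
    homChordal (c • v) w = homChordal v w := by
  simp only [homChordal, PiLp.smul_apply, smul_eq_mul, norm_smul]
  rw [show c * v 0 * w 1 - c * v 1 * w 0 = c * (v 0 * w 1 - v 1 * w 0) by ring, norm_mul,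
    mul_assoc, mul_div_mul_left _ _ (norm_ne_zero_iff.mpr hc)]

lemma homChordal_homCoord_zero (v : ℂ²) : homChordal v (homCoord (some 0)) = ‖v 0‖ / ‖v‖ := by
  rw [homChordal, norm_homCoord_some]
  simp [homCoord]

lemma toEuclideanCLM_homCoord {g : Matrix (Fin 2) (Fin 2) ℂ} (hg : g.det ≠ 0) (x : Option ℂ) :
    ∃ c ≠ (0 : ℂ), toCLM g (homCoord x) = c • homCoord (mobius g x) := by
  rw [det_fin_two] at hg
  cases x with
  | none =>
    by_cases h : g 1 0 = 0
    · refine ⟨g 0 0, fun h0 => hg (by simp [h, h0]), ?_⟩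
      ext i; fin_cases i <;> simp [homCoord, mobius, h]
    · refine ⟨g 1 0, h, ?_⟩
      ext i; fin_cases i <;> simp [homCoord, mobius, h, mul_div_cancel₀ _ h]
  | some z =>
    by_cases h : g 1 0 * z + g 1 1 = 0
    · refine ⟨g 0 0 * z + g 0 1,
        fun h0 => hg (by linear_combination g 0 0 * h - g 1 0 * h0), ?_⟩
      ext i; fin_cases i <;> simp [homCoord, mobius, h]
    · refine ⟨g 1 0 * z + g 1 1, h, ?_⟩
      ext i; fin_cases i <;> simp [homCoord, mobius, h, mul_div_cancel₀ _ h]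

lemma homChordal_homCoord_mobius_left {g : Matrix (Fin 2) (Fin 2) ℂ} (hg : g.det ≠ 0)
    (x : Option ℂ) (w : ℂ²) :
    homChordal (homCoord (mobius g x)) w = homChordal (toCLM g (homCoord x)) w := by
  obtain ⟨c, hc, hcx⟩ := toEuclideanCLM_homCoord hg x
  rw [hcx, homChordal_smul_left hc]

lemma chordal_mobius {g : Matrix (Fin 2) (Fin 2) ℂ} (hg : g.det ≠ 0) (x y : Option ℂ) :
    chordal (mobius g x) (mobius g y) =
      homChordal (toCLM g (homCoord x)) (toCLM g (homCoord y)) := by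
  rw [chordal_eq_homChordal, homChordal_homCoord_mobius_left hg, homChordal_comm,
    homChordal_homCoord_mobius_left hg, homChordal_comm]

lemma homChordal_toEuclideanCLM (g : Matrix (Fin 2) (Fin 2) ℂ) (v w : ℂ²) :
    homChordal (toCLM g v) (toCLM g w) =
      ‖g.det‖ * ‖v 0 * w 1 - v 1 * w 0‖ / (‖toCLM g v‖ * ‖toCLM g w‖) := by
  simp only [homChordal, ← norm_mul, det_fin_two]
  congr 2
  simp only [ofLp_toEuclideanCLM, mulVec, dotProduct, Fin.sum_univ_two]
  ring

lemma homChordal_toEuclideanCLM_le {g : Matrix (Fin 2) (Fin 2) ℂ} (hg : g.det = 1) {v w : ℂ²}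
    (hv : ‖v‖ ≤ ‖toCLM g v‖) (hw : ‖w‖ ≤ ‖toCLM g w‖) :
    homChordal (toCLM g v) (toCLM g w) ≤ homChordal v w := by
  rw [homChordal_toEuclideanCLM, hg, norm_one, one_mul, homChordal]
  rcases eq_or_ne v 0 with rfl | hv0
  · simp
  rcases eq_or_ne w 0 with rfl | hw0
  · simp
  gcongr

lemma norm_toEuclideanCLM_of_mem_unitaryGroup {𝕜 n : Type*} [RCLike 𝕜] [Fintype n]
    [DecidableEq n] {k : Matrix n n 𝕜} (hk : k ∈ unitaryGroup n 𝕜) (v : EuclideanSpace 𝕜 n) :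
    ‖toEuclideanCLM (n := n) (𝕜 := 𝕜) k v‖ = ‖v‖ :=
  ContinuousLinearMap.norm_map_of_mem_unitary (Unitary.map_mem _ hk) v

lemma homChordal_toEuclideanCLM_of_mem_unitaryGroup {k : Matrix (Fin 2) (Fin 2) ℂ}
    (hk : k ∈ unitaryGroup (Fin 2) ℂ) (v w : ℂ²) :
    homChordal (toCLM k v) (toCLM k w) = homChordal v w := by
  rw [homChordal_toEuclideanCLM, norm_toEuclideanCLM_of_mem_unitaryGroup hk,
    norm_toEuclideanCLM_of_mem_unitaryGroup hk,
    CStarRing.norm_of_mem_unitary (det_of_mem_unitary hk : k.det ∈ unitary ℂ), one_mul, homChordal]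

lemma SU2.mem_unitaryGroup {k : Matrix (Fin 2) (Fin 2) ℂ} (hk : SU2 k) :
    k ∈ unitaryGroup (Fin 2) ℂ := by
  rw [mem_unitaryGroup_iff', star_eq_conjTranspose]
  exact hk.2

lemma opNorm_cartan_le {k k' : Matrix (Fin 2) (Fin 2) ℂ} (hk : SU2 k) (hk' : SU2 k') {lam : ℂ}
    (hlam : 1 ≤ ‖lam‖) : opNorm (k * diagonal ![lam, lam⁻¹] * k') ≤ ‖lam‖ := by
  have hinv : ‖lam‖⁻¹ ≤ ‖lam‖ := (inv_le_one_of_one_le₀ hlam).trans hlam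
  calc opNorm (k * diagonal ![lam, lam⁻¹] * k')
      ≤ ‖k‖ * ‖diagonal ![lam, lam⁻¹]‖ * ‖k'‖ :=
        (l2_opNorm_mul _ _).trans (mul_le_mul_of_nonneg_right (l2_opNorm_mul _ _) (norm_nonneg _))
    _ = ‖![lam, lam⁻¹]‖ := by
        rw [CStarRing.norm_of_mem_unitary hk.mem_unitaryGroup,
          CStarRing.norm_of_mem_unitary hk'.mem_unitaryGroup, l2_opNorm_diagonal, one_mul, mul_one]
    _ ≤ ‖lam‖ := (pi_norm_le_iff_of_nonneg (norm_nonneg _)).mpr (by simp [Fin.forall_fin_two, hinv])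

lemma mul_norm_apply_zero_le_norm_diagonal (lam : ℂ) (u : ℂ²) :
    ‖lam‖ * ‖u 0‖ ≤ ‖toCLM (diagonal ![lam, lam⁻¹]) u‖ := by
  simpa [ofLp_toEuclideanCLM] using PiLp.norm_apply_le (toCLM (diagonal ![lam, lam⁻¹]) u) 0

lemma norm_homCoord_le_cartan_apply {k k' : Matrix (Fin 2) (Fin 2) ℂ} (hk : SU2 k) (hk' : SU2 k')
    {lam : ℂ} (hlam : lam ≠ 0) {x : Option ℂ} (hx : ‖lam‖⁻¹ ≤ chordal x (mobius k'⁻¹ (some 0))) :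
    ‖homCoord x‖ ≤ ‖toCLM (k * diagonal ![lam, lam⁻¹] * k') (homCoord x)‖ := by
  set v := homCoord x
  set u := toCLM k' v
  have hk'inv : k' * k'⁻¹ = 1 := mul_nonsing_inv k' (by simp [hk'.1])
  have hdist : chordal x (mobius k'⁻¹ (some 0)) = ‖u 0‖ / ‖v‖ := by
    calc chordal x (mobius k'⁻¹ (some 0))
        = homChordal (toCLM k'⁻¹ (homCoord (some 0))) v := by
          rw [chordal_eq_homChordal, homChordal_comm,
            homChordal_homCoord_mobius_left (by simp [hk'.1])]
      _ = homChordal u (homCoord (some 0)) := by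
          rw [← homChordal_toEuclideanCLM_of_mem_unitaryGroup hk'.mem_unitaryGroup,
            ← mul_apply_eq_comp, ← map_mul, hk'inv, map_one, one_apply_eq_self, homChordal_comm]
      _ = ‖u 0‖ / ‖v‖ := by
          rw [homChordal_homCoord_zero,
            norm_toEuclideanCLM_of_mem_unitaryGroup hk'.mem_unitaryGroup]
  have hu : ‖lam‖⁻¹ * ‖v‖ ≤ ‖u 0‖ := by
    rwa [hdist, le_div_iff₀ (norm_homCoord_pos x)] at hx
  calc ‖v‖ = ‖lam‖ * (‖lam‖⁻¹ * ‖v‖) := (mul_inv_cancel_left₀ (norm_ne_zero_iff.mpr hlam) _).symm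
    _ ≤ ‖lam‖ * ‖u 0‖ := by gcongr
    _ ≤ ‖toCLM (diagonal ![lam, lam⁻¹]) u‖ := mul_norm_apply_zero_le_norm_diagonal lam u
    _ = ‖toCLM (k * diagonal ![lam, lam⁻¹] * k') v‖ := by
        rw [map_mul, map_mul, mul_apply_eq_comp, mul_apply_eq_comp,
          norm_toEuclideanCLM_of_mem_unitaryGroup hk.mem_unitaryGroup]

theorem uniform_lipschitz_outside_south_disc :
    ∃ C₂ > (0:ℝ), ∀ γ : SL2, 1 < opNorm ↑γ →
      ∀ (k k' : Matrix (Fin 2) (Fin 2) ℂ) (lam : ℂ),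
        SU2 k → SU2 k' → 1 ≤ ‖lam‖ →
        (↑γ : Matrix (Fin 2) (Fin 2) ℂ) = k * Matrix.diagonal ![lam, lam⁻¹] * k' →
        ∀ x y : Option ℂ,
          x ∈ (Dopen (mobius k'⁻¹ (some 0)) (opNorm ↑γ)⁻¹)ᶜ →
          y ∈ (Dopen (mobius k'⁻¹ (some 0)) (opNorm ↑γ)⁻¹)ᶜ →
          chordal (mobius ↑γ x) (mobius ↑γ y) ≤ C₂ * chordal x y := by
  refine ⟨1, one_pos, fun γ hγ k k' lam hk hk' hlam hcartan x y hx hy => ?_⟩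
  have hnorm : opNorm ↑γ ≤ ‖lam‖ := hcartan ▸ opNorm_cartan_le hk hk' hlam
  have hlam0 : lam ≠ 0 := norm_pos_iff.mp (one_pos.trans_le hlam)
  have hexpand : ∀ z ∈ (Dopen (mobius k'⁻¹ (some 0)) (opNorm ↑γ)⁻¹)ᶜ,
      ‖homCoord z‖ ≤ ‖toCLM γ (homCoord z)‖ := fun z hz => by
    rw [hcartan]
    exact norm_homCoord_le_cartan_apply hk hk' hlam0
      ((inv_anti₀ (one_pos.trans hγ) hnorm).trans (not_lt.mp hz))
  rw [one_mul, chordal_mobius (by simp), chordal_eq_homChordal]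
  exact homChordal_toEuclideanCLM_le γ.2 (hexpand x hx) (hexpand y hy)
end

section
/- Let (Aₙ) and (Bₙ) be two sequences of events in a probability space such that: (i) the σ-algebras generated by (Aₙ)ₙ and by (Bₙ)ₙ are independent; (ii) almost surely, infinitely many of the Bₙ occur; (iii) P(Aₙ) → 1 as n → ∞. Then almost surely, infinitely many of the events Aₙ ∩ Bₙ occur. -/
/-!
Fix `k`. Given `c < 1`, choose `m ≥ k` with `c < μ (A n)` for all `n ≥ m`, and split
`⋃ n ≥ m, B n` (which has full measure) into the disjoint pieces `T n` of `disjointed`.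
Each `T n` lies in the σ-algebra generated by the `B`'s, so independence gives
`μ (A n ∩ T n) = μ (A n) μ (T n) ≥ c μ (T n)`; summing, `μ (⋃ n ≥ k, A n ∩ B n) ≥ c`.
Hence every tail union of the `A n ∩ B n` has full measure.
-/

open MeasureTheory Filter ProbabilityTheory MeasurableSpace Set
open scoped ENNReal

section

variable {Ω : Type*} [MeasurableSpace Ω] {μ : Measure Ω}

theorem ae_mem_limsup_atTop_iff_forall_ae_mem_iUnion_ge (s : ℕ → Set Ω) :
    (∀ᵐ ω ∂μ, ω ∈ limsup s atTop) ↔ ∀ m, ∀ᵐ ω ∂μ, ω ∈ ⋃ n ≥ m, s n := by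
  simp only [limsup_eq_iInf_iSup_of_nat, iInf_eq_iInter, iSup_eq_iUnion, mem_iInter,
    ae_all_iff]

theorem indep_generateFrom_range_comp {ι κ : Type*} {A B : ι → Set Ω}
    (h : Indep (generateFrom (range A)) (generateFrom (range B)) μ) (f g : κ → ι) :
    Indep (generateFrom (range (A ∘ f))) (generateFrom (range (B ∘ g))) μ :=
  indep_of_indep_of_le_right
    (indep_of_indep_of_le_left h (generateFrom_mono (range_comp_subset_range f A)))
    (generateFrom_mono (range_comp_subset_range g B))

theorem mul_measure_iUnion_le_measure_iUnion_inter {A B : ℕ → Set Ω}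
    (hA : ∀ n, MeasurableSet (A n)) (hB : ∀ n, MeasurableSet (B n))
    (hindep : Indep (generateFrom (range A)) (generateFrom (range B)) μ)
    {c : ℝ≥0∞} (hc : ∀ n, c ≤ μ (A n)) :
    c * μ (⋃ n, B n) ≤ μ (⋃ n, A n ∩ B n) := by
  have hT : ∀ n, MeasurableSet[generateFrom (range B)] (disjointed B n) :=
    MeasurableSet.disjointed fun n => measurableSet_generateFrom ⟨n, rfl⟩
  have hAT : ∀ n, μ (A n ∩ disjointed B n) = μ (A n) * μ (disjointed B n) := fun n =>
    (Indep_iff _ _ μ).1 hindep _ _ (measurableSet_generateFrom ⟨n, rfl⟩) (hT n)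
  calc c * μ (⋃ n, B n) = ∑' n, c * μ (disjointed B n) := by
        rw [← iUnion_disjointed, measure_iUnion (disjoint_disjointed B)
          (MeasurableSet.disjointed hB), ENNReal.tsum_mul_left]
    _ ≤ ∑' n, μ (A n ∩ disjointed B n) :=
        ENNReal.tsum_le_tsum fun n => by rw [hAT]; gcongr; exact hc n
    _ = μ (⋃ n, A n ∩ disjointed B n) :=
        (measure_iUnion (fun i j hij => ((disjoint_disjointed B hij).mono inter_subset_right
          inter_subset_right)) fun n => (hA n).inter (MeasurableSet.disjointed hB n)).symm
    _ ≤ μ (⋃ n, A n ∩ B n) :=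
        measure_mono (iUnion_mono fun n => inter_subset_inter_right _ (disjointed_subset B n))

end

theorem limsup_inter_of_indep_tendsto_one
    {Ω : Type*} [MeasurableSpace Ω] (μ : Measure Ω) [IsProbabilityMeasure μ]
    (A B : ℕ → Set Ω) (hA : ∀ n, MeasurableSet (A n)) (hB : ∀ n, MeasurableSet (B n))
    (hindep : Indep (MeasurableSpace.generateFrom (Set.range A))
      (MeasurableSpace.generateFrom (Set.range B)) μ)
    (hBio : ∀ᵐ ω ∂μ, ω ∈ Filter.limsup B Filter.atTop)
    (hA1 : Filter.Tendsto (fun n => μ (A n)) Filter.atTop (nhds 1)) :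
    ∀ᵐ ω ∂μ, ω ∈ Filter.limsup (fun n => A n ∩ B n) Filter.atTop := by
  rw [ae_mem_limsup_atTop_iff_forall_ae_mem_iUnion_ge] at hBio ⊢
  intro k
  refine (mem_ae_iff_prob_eq_one (.iUnion fun n => .iUnion fun _ => (hA n).inter (hB n))).2 <|
    le_antisymm prob_le_one (le_of_forall_lt_imp_le_of_dense fun c hc => ?_)
  obtain ⟨m, hm⟩ := eventually_atTop.1
    ((hA1.eventually (lt_mem_nhds hc)).and (eventually_ge_atTop k))
  have hBm : 1 ≤ μ (⋃ n, B (n + m)) := by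
    rw [← iUnion_ge_eq_iUnion_nat_add, ← measure_univ (μ := μ)]
    exact measure_mono_ae ((hBio m).mono fun ω hω _ => hω)
  calc c ≤ c * μ (⋃ n, B (n + m)) := le_mul_of_one_le_right' hBm
    _ ≤ μ (⋃ n, A (n + m) ∩ B (n + m)) :=
        mul_measure_iUnion_le_measure_iUnion_inter (fun n => hA (n + m)) (fun n => hB (n + m))
          (indep_generateFrom_range_comp hindep (· + m) (· + m))
          fun n => (hm (n + m) (Nat.le_add_left m n)).1.le
    _ ≤ μ (⋃ n ≥ k, A n ∩ B n) :=
        measure_mono <| iUnion_subset fun n => subset_biUnion_of_mem (u := fun n => A n ∩ B n)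
          ((hm m le_rfl).2.trans (Nat.le_add_left m n))
end

section
/- Let h, h̃ : [1,∞) → (0,∞) with h nondecreasing and ∫₁^∞ dt/h(t) = ∞. Then there exists a nondecreasing positive function h̃ with h̃(t) → ∞, h̃(t)/h(t) → ∞, and ∫₁^∞ dt/h̃(t) = ∞. -/
open MeasureTheory Filter
open scoped ENNReal

/-!
Let `ν` be the measure with density `1 / h` on `(1, ∞)`: it has infinite total mass but is finite on
bounded sets. With `c n` the `ν`-mass of `{t | ⌊t⌋₊ = n}` and `S n = 1 + c 0 + ⋯ + c (n - 1)`, the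
weight `φ t = S ⌊t⌋₊` is nondecreasing and tends to infinity, while `∫ dν / φ = ∑ c n / S n`
diverges by the Abel–Dini theorem, its partial sums dominating `log (S n)`. Take `h̃ = φ h`.
-/

def shiftedPartialSum (c : ℕ → ℝ) (n : ℕ) : ℝ := 1 + ∑ i ∈ Finset.range n, c i

section shiftedPartialSum

variable {c : ℕ → ℝ}

lemma shiftedPartialSum_succ (n : ℕ) :
    shiftedPartialSum c (n + 1) = shiftedPartialSum c n + c n := by
  simp only [shiftedPartialSum, Finset.sum_range_succ, add_assoc]

lemma one_le_shiftedPartialSum (hc : ∀ n, 0 ≤ c n) (n : ℕ) : 1 ≤ shiftedPartialSum c n :=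
  le_add_of_nonneg_right (Finset.sum_nonneg fun i _ => hc i)

lemma shiftedPartialSum_pos (hc : ∀ n, 0 ≤ c n) (n : ℕ) : 0 < shiftedPartialSum c n :=
  one_pos.trans_le (one_le_shiftedPartialSum hc n)

lemma monotone_shiftedPartialSum (hc : ∀ n, 0 ≤ c n) : Monotone (shiftedPartialSum c) :=
  monotone_nat_of_le_succ fun n => by
    rw [shiftedPartialSum_succ]; exact le_add_of_nonneg_right (hc n)

lemma tendsto_shiftedPartialSum (hc : ∀ n, 0 ≤ c n) (hs : ¬Summable c) :
    Tendsto (shiftedPartialSum c) atTop atTop :=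
  tendsto_atTop_add_const_left _ 1 ((not_summable_iff_tendsto_nat_atTop_of_nonneg hc).1 hs)

lemma log_shiftedPartialSum_le (hc : ∀ n, 0 ≤ c n) (n : ℕ) :
    Real.log (shiftedPartialSum c n) ≤ ∑ i ∈ Finset.range n, c i / shiftedPartialSum c i := by
  induction n with
  | zero => simp [shiftedPartialSum]
  | succ n ih =>
    have hpos := shiftedPartialSum_pos hc n
    have hstep : Real.log (shiftedPartialSum c (n + 1)) - Real.log (shiftedPartialSum c n) ≤
        c n / shiftedPartialSum c n := by
      rw [← Real.log_div (shiftedPartialSum_pos hc _).ne' hpos.ne', shiftedPartialSum_succ,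
        add_div, div_self hpos.ne']
      have hquot : 0 < 1 + c n / shiftedPartialSum c n :=
        add_pos_of_pos_of_nonneg one_pos (div_nonneg (hc n) hpos.le)
      linarith [Real.log_le_sub_one_of_pos hquot]
    rw [Finset.sum_range_succ]
    linarith

/-- The Abel–Dini theorem. -/
theorem not_summable_div_shiftedPartialSum (hc : ∀ n, 0 ≤ c n) (hs : ¬Summable c) :
    ¬Summable fun n => c n / shiftedPartialSum c n := by
  intro hsum
  have hlog := Real.tendsto_log_atTop.comp (tendsto_shiftedPartialSum hc hs)
  obtain ⟨n, hn⟩ := (hlog.eventually_gt_atTop (∑' i, c i / shiftedPartialSum c i)).exists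
  refine hn.not_ge ((log_shiftedPartialSum_le hc n).trans (hsum.sum_le_tsum _ fun i _ => ?_))
  exact div_nonneg (hc i) (shiftedPartialSum_pos hc i).le

end shiftedPartialSum

lemma tsum_ofReal_eq_top_iff_not_summable {ι : Type*} {f : ι → ℝ} (hf : ∀ i, 0 ≤ f i) :
    ∑' i, ENNReal.ofReal (f i) = ∞ ↔ ¬Summable f := by
  refine ⟨fun h hs => hs.tsum_ofReal_ne_top h, fun hs => by_contra fun h => hs ?_⟩
  exact (ENNReal.summable_toReal h).congr fun i => ENNReal.toReal_ofReal (hf i)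

lemma not_summable_toReal_measure_singleton (μ : Measure ℕ) (hfin : ∀ n, μ {n} ≠ ∞)
    (htop : μ Set.univ = ∞) : ¬Summable fun n => (μ {n}).toReal := by
  rw [← tsum_ofReal_eq_top_iff_not_summable fun _ => ENNReal.toReal_nonneg]
  simpa [ENNReal.ofReal_toReal (hfin _), htop] using (lintegral_countable' (μ := μ) 1).symm

lemma lintegral_inv_shiftedPartialSum_eq_top (μ : Measure ℕ) (hfin : ∀ n, μ {n} ≠ ∞)
    (htop : μ Set.univ = ∞) :
    ∫⁻ n, ENNReal.ofReal (1 / shiftedPartialSum (fun i => (μ {i}).toReal) n) ∂μ = ∞ := by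
  have hc : ∀ n, 0 ≤ (μ {n}).toReal := fun _ => ENNReal.toReal_nonneg
  have hterm : ∀ n, ENNReal.ofReal (1 / shiftedPartialSum (fun i => (μ {i}).toReal) n) * μ {n} =
      ENNReal.ofReal ((μ {n}).toReal / shiftedPartialSum (fun i => (μ {i}).toReal) n) := by
    intro n
    rw [div_eq_mul_one_div (μ {n}).toReal, ENNReal.ofReal_mul (hc n),
      ENNReal.ofReal_toReal (hfin n), mul_comm]
  rw [lintegral_countable', tsum_congr hterm, tsum_ofReal_eq_top_iff_not_summable fun n =>
    div_nonneg (hc n) (shiftedPartialSum_pos hc n).le]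
  exact not_summable_div_shiftedPartialSum hc (not_summable_toReal_measure_singleton μ hfin htop)

theorem exists_monotone_tendsto_lintegral_inv_eq_top (ν : Measure ℝ)
    (hfin : ∀ x, ν (Set.Iio x) ≠ ∞) (htop : ν Set.univ = ∞) :
    ∃ φ : ℝ → ℝ, Monotone φ ∧ (∀ t, 1 ≤ φ t) ∧ Tendsto φ atTop atTop ∧
      ∫⁻ t, ENNReal.ofReal (1 / φ t) ∂ν = ∞ := by
  set μ := ν.map (Nat.floor : ℝ → ℕ)
  have hfinμ : ∀ n, μ {n} ≠ ∞ := fun n => by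
    refine ne_top_of_le_ne_top (hfin (n + 1)) ?_
    rw [Measure.map_apply Nat.measurable_floor (measurableSet_singleton n)]
    refine measure_mono fun t (ht : ⌊t⌋₊ = n) => ?_
    simpa [ht] using Nat.lt_floor_add_one t
  have htopμ : μ Set.univ = ∞ := by
    rwa [Measure.map_apply Nat.measurable_floor MeasurableSet.univ]
  have hc : ∀ n, 0 ≤ (μ {n}).toReal := fun _ => ENNReal.toReal_nonneg
  refine ⟨fun t => shiftedPartialSum (fun i => (μ {i}).toReal) ⌊t⌋₊,
    (monotone_shiftedPartialSum hc).comp Nat.floor_mono, fun t => one_le_shiftedPartialSum hc _,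
    (tendsto_shiftedPartialSum hc (not_summable_toReal_measure_singleton μ hfinμ htopμ)).comp
      tendsto_nat_floor_atTop, ?_⟩
  rw [← lintegral_inv_shiftedPartialSum_eq_top μ hfinμ htopμ,
    lintegral_map Measurable.of_discrete Nat.measurable_floor]

lemma withDensity_inv_Iio_ne_top {h : ℝ → ℝ} (hpos : ∀ t : ℝ, 1 ≤ t → 0 < h t)
    (hmono : MonotoneOn h (Set.Ici 1)) (x : ℝ) :
    (volume.restrict (Set.Ioi 1)).withDensity (fun t => ENNReal.ofReal (1 / h t)) (Set.Iio x)
      ≠ ∞ := by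
  rw [withDensity_apply _ measurableSet_Iio, Measure.restrict_restrict measurableSet_Iio,
    Set.Iio_inter_Ioi]
  refine ne_top_of_le_ne_top (b := ∫⁻ _ in Set.Ioo 1 x, ENNReal.ofReal (1 / h 1)) ?_ ?_
  · rw [setLIntegral_const]
    exact ENNReal.mul_ne_top ENNReal.ofReal_ne_top measure_Ioo_lt_top.ne
  · refine setLIntegral_mono measurable_const fun t ht => ENNReal.ofReal_le_ofReal ?_
    exact one_div_le_one_div_of_le (hpos 1 le_rfl)
      (hmono Set.self_mem_Ici (Set.mem_Ici.2 ht.1.le) ht.1.le)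

theorem exists_faster_divergent_function (h : ℝ → ℝ)
    (hpos : ∀ t : ℝ, 1 ≤ t → 0 < h t) (hmono : MonotoneOn h (Set.Ici 1))
    (hdiv : ∫⁻ t in Set.Ioi (1:ℝ), ENNReal.ofReal (1 / h t) = ⊤) :
    ∃ ht : ℝ → ℝ, (∀ t : ℝ, 1 ≤ t → 0 < ht t) ∧ MonotoneOn ht (Set.Ici 1) ∧
      Tendsto ht atTop atTop ∧
      Tendsto (fun t => ht t / h t) atTop atTop ∧
      ∫⁻ t in Set.Ioi (1:ℝ), ENNReal.ofReal (1 / ht t) = ⊤ := by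
  set ν := (volume.restrict (Set.Ioi (1:ℝ))).withDensity fun t => ENNReal.ofReal (1 / h t)
  obtain ⟨φ, hφmono, hφ1, hφtop, hφint⟩ :=
    exists_monotone_tendsto_lintegral_inv_eq_top ν (withDensity_inv_Iio_ne_top hpos hmono)
      (by rwa [withDensity_apply _ MeasurableSet.univ, Measure.restrict_univ])
  have hφpos : ∀ t, 0 < φ t := fun t => one_pos.trans_le (hφ1 t)
  refine ⟨φ * h, fun t ht => mul_pos (hφpos t) (hpos t ht),
    (hφmono.monotoneOn _).mul hmono (fun t _ => (hφpos t).le) (fun t ht => (hpos t ht).le),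
    ?_, ?_, ?_⟩
  · refine tendsto_atTop_mono' _ ?_ (hφtop.atTop_mul_const (hpos 1 le_rfl))
    filter_upwards [eventually_ge_atTop 1] with t ht
    exact mul_le_mul_of_nonneg_left (hmono Set.self_mem_Ici ht ht) (hφpos t).le
  · refine hφtop.congr' ?_
    filter_upwards [eventually_ge_atTop 1] with t ht
    exact (mul_div_cancel_right₀ _ (hpos t ht).ne').symm
  · have hhmeas : AEMeasurable (fun t => ENNReal.ofReal (1 / h t)) (volume.restrict (Set.Ioi 1)) :=
      ((aemeasurable_restrict_of_monotoneOn measurableSet_Ioi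
        (hmono.mono Set.Ioi_subset_Ici_self)).const_div 1).ennreal_ofReal
    rw [← hφint, lintegral_withDensity_eq_lintegral_mul₀ hhmeas
      (hφmono.measurable.const_div 1).ennreal_ofReal.aemeasurable]
    refine lintegral_congr fun t => ?_
    rw [Pi.mul_apply, Pi.mul_apply, ← ENNReal.ofReal_mul' (one_div_nonneg.2 (hφpos t).le),
      one_div_mul_one_div, mul_comm (h t)]
end
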